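/- arXiv:1007.0457 — 2 statements merged into one kernel-verified Lean document; each statement's English description precedes it below -/
import Mathlib

section
/- Let g₁ be the 6-dimensional real Lie algebra with basis w1,…,w6 and brackets [w1,w3]=−w4, [w1,w4]=w3, [w1,w5]=−w6, [w1,w6]=w5, [w2,w3]=w6, [w2,w4]=−w5, [w2,w5]=−w4, [w2,w6]=w3, [w3,w4]=−w1, [w3,w6]=w2, [w4,w5]=w2, [w5,w6]=a²·w1, and all other brackets of basis elements zero, extended antisymmetrically, where a ≠ 0 is a real constant. Then the derived subalgebra [g₁, g₁] equals g₁, and consequently g₁ is not solvable. -/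
/-- in a real Lie algebra with basis `w₁,…,w₆` obeying the bracket table
of the quotient algebra `g₁ = g/r` of the telegraph symmetry algebra (with `a ≠ 0`),
the derived subalgebra is the whole algebra, and the algebra is not solvable. -/
theorem quotient_algebra_perfect_not_solvable (a : ℝ) (ha : a ≠ 0)
    (L : Type*) [LieRing L] [LieAlgebra ℝ L] (w : Fin 6 → L)
    (hbasis : LinearIndependent ℝ w)
    (hspan : Submodule.span ℝ (Set.range w) = ⊤)
    (h13 : ⁅w 0, w 2⁆ = -w 3) (h14 : ⁅w 0, w 3⁆ = w 2)
    (h15 : ⁅w 0, w 4⁆ = -w 5) (h16 : ⁅w 0, w 5⁆ = w 4)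
    (h23 : ⁅w 1, w 2⁆ = w 5) (h24 : ⁅w 1, w 3⁆ = -w 4)
    (h25 : ⁅w 1, w 4⁆ = -w 3) (h26 : ⁅w 1, w 5⁆ = w 2)
    (h34 : ⁅w 2, w 3⁆ = -w 0) (h36 : ⁅w 2, w 5⁆ = w 1)
    (h45 : ⁅w 3, w 4⁆ = w 1) (h56 : ⁅w 4, w 5⁆ = a ^ 2 • w 0)
    (h12 : ⁅w 0, w 1⁆ = 0) (h35 : ⁅w 2, w 4⁆ = 0) (h46 : ⁅w 3, w 5⁆ = 0) :
    LieAlgebra.derivedSeries ℝ L 1 = ⊤ ∧ ¬ LieAlgebra.IsSolvable L := by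
  have hbr : ∀ x y : L, ⁅x, y⁆ ∈ LieAlgebra.derivedSeries ℝ L 1 := by
    intro x y
    exact LieSubmodule.lie_mem_lie (LieSubmodule.mem_top x) (LieSubmodule.mem_top y)
  have hw : ∀ i, w i ∈ LieAlgebra.derivedSeries ℝ L 1 := by
    intro i
    fin_cases i
    · have := hbr (w 2) (w 3); rw [h34] at this
      simpa using (LieAlgebra.derivedSeries ℝ L 1).neg_mem this
    · have := hbr (w 3) (w 4); rwa [h45] at this
    · have := hbr (w 0) (w 3); rwa [h14] at this
    · have := hbr (w 0) (w 2); rw [h13] at this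
      simpa using (LieAlgebra.derivedSeries ℝ L 1).neg_mem this
    · have := hbr (w 0) (w 5); rwa [h16] at this
    · have := hbr (w 0) (w 4); rw [h15] at this
      simpa using (LieAlgebra.derivedSeries ℝ L 1).neg_mem this
  have htop : LieAlgebra.derivedSeries ℝ L 1 = ⊤ := by
    rw [← LieSubmodule.toSubmodule_inj, LieSubmodule.top_toSubmodule]
    rw [eq_top_iff, ← hspan, Submodule.span_le]
    rintro x ⟨i, rfl⟩
    exact hw i
  refine ⟨htop, ?_⟩
  have hall : ∀ n, LieAlgebra.derivedSeries ℝ L n = ⊤ := by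
    intro n
    induction n with
    | zero => rfl
    | succ n ih =>
      rw [LieAlgebra.derivedSeries_def, LieAlgebra.derivedSeriesOfIdeal_succ,
        ← LieAlgebra.derivedSeries_def, ih]
      exact htop
  rw [LieAlgebra.isSolvable_iff ℝ]
  rintro ⟨k, hk⟩
  have : (⊤ : LieIdeal ℝ L) = ⊥ := by rw [← hall k, hk]
  have h0 : w 0 = 0 := by
    have : w 0 ∈ (⊥ : LieIdeal ℝ L) := this ▸ LieSubmodule.mem_top (w 0)
    simpa using this
  exact hbasis.ne_zero 0 h0
end

section
/- For the vector fields v8 = −y·cos(x)·∂_r + (y·sin(x)/r)·∂_x + r·cos(x)·∂_y and v9 = −y·sin(x)·∂_r − (y·cos(x)/r)·∂_x + r·sin(x)·∂_y on {(r,x,y) : r > 0}, the commutator satisfies [v8, v9] = −v1, where v1 = ∂_x; i.e. [v8, v9] f = −∂f/∂x for all smooth f. -/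
/-- `v₈ f = −y cos x · f_r + (y sin x / r) · f_x + r cos x · f_y` on functions of `(r,x,y)`. -/
noncomputable def V8 (f : ℝ → ℝ → ℝ → ℝ) : ℝ → ℝ → ℝ → ℝ := fun r x y =>
  -y * Real.cos x * deriv (fun r' => f r' x y) r
    + (y * Real.sin x / r) * deriv (fun x' => f r x' y) x
    + r * Real.cos x * deriv (fun y' => f r x y') y

/-- `v₉ f = −y sin x · f_r − (y cos x / r) · f_x + r sin x · f_y` on functions of `(r,x,y)`. -/
noncomputable def V9 (f : ℝ → ℝ → ℝ → ℝ) : ℝ → ℝ → ℝ → ℝ := fun r x y =>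
  -y * Real.sin x * deriv (fun r' => f r' x y) r
    - (y * Real.cos x / r) * deriv (fun x' => f r x' y) x
    + r * Real.sin x * deriv (fun y' => f r x y') y

lemma pdr {G : ℝ×ℝ×ℝ → ℝ} {r x y : ℝ} (hG : DifferentiableAt ℝ G (r,x,y)) :
    HasDerivAt (fun t => G (t,x,y)) (fderiv ℝ G (r,x,y) (1,0,0)) r := by
  have h : HasDerivAt (fun t : ℝ => ((t,x,y) : ℝ×ℝ×ℝ)) ((1,0,0) : ℝ×ℝ×ℝ) r := by
    have := (hasDerivAt_id r).prodMk (hasDerivAt_const r ((x,y) : ℝ×ℝ))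
    simpa [Prod.zero_eq_mk] using this
  exact hG.hasFDerivAt.comp_hasDerivAt r h

lemma pdx {G : ℝ×ℝ×ℝ → ℝ} {r x y : ℝ} (hG : DifferentiableAt ℝ G (r,x,y)) :
    HasDerivAt (fun t => G (r,t,y)) (fderiv ℝ G (r,x,y) (0,1,0)) x := by
  have h : HasDerivAt (fun t : ℝ => ((r,t,y) : ℝ×ℝ×ℝ)) ((0,1,0) : ℝ×ℝ×ℝ) x := by
    have := (hasDerivAt_const x r).prodMk ((hasDerivAt_id x).prodMk (hasDerivAt_const x y))
    simpa using this
  exact hG.hasFDerivAt.comp_hasDerivAt x h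

lemma pdy {G : ℝ×ℝ×ℝ → ℝ} {r x y : ℝ} (hG : DifferentiableAt ℝ G (r,x,y)) :
    HasDerivAt (fun t => G (r,x,t)) (fderiv ℝ G (r,x,y) (0,0,1)) y := by
  have h : HasDerivAt (fun t : ℝ => ((r,x,t) : ℝ×ℝ×ℝ)) ((0,0,1) : ℝ×ℝ×ℝ) y := by
    have := (hasDerivAt_const y r).prodMk ((hasDerivAt_const y x).prodMk (hasDerivAt_id y))
    simpa using this
  exact hG.hasFDerivAt.comp_hasDerivAt y h

lemma aux (F : ℝ×ℝ×ℝ → ℝ) (hF : ContDiff ℝ (⊤ : ℕ∞) F) (r x y : ℝ) (hr : 0 < r) :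
    V8 (V9 (fun a b c => F (a,b,c))) r x y - V9 (V8 (fun a b c => F (a,b,c))) r x y
      = -deriv (fun x' => F (r,x',y)) x := by
  have hd : Differentiable ℝ F := hF.differentiable (by simp)
  have h2 : ContDiff ℝ (⊤ : ℕ∞) (fderiv ℝ F) := hF.fderiv_right (by simp)
  have hdv : ∀ v : ℝ×ℝ×ℝ, Differentiable ℝ (fun p => fderiv ℝ F p v) :=
    fun v => (h2.clm_apply contDiff_const).differentiable (by simp)
  have happ : ∀ (v p w : ℝ×ℝ×ℝ),
      fderiv ℝ (fun q => fderiv ℝ F q v) p w = fderiv ℝ (fderiv ℝ F) p w v := by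
    intro v p w
    have h2d : DifferentiableAt ℝ (fderiv ℝ F) p := (h2.differentiable (by simp)) p
    have key := ((ContinuousLinearMap.apply ℝ ℝ v).hasFDerivAt.comp p h2d.hasFDerivAt).fderiv
    have h3 : fderiv ℝ (fun q => fderiv ℝ F q v) p
        = (ContinuousLinearMap.apply ℝ ℝ v).comp (fderiv ℝ (fderiv ℝ F) p) := by
      rw [← key]; rfl
    rw [h3]; rfl
  have hsym : ∀ (p v w : ℝ×ℝ×ℝ),
      fderiv ℝ (fderiv ℝ F) p v w = fderiv ℝ (fderiv ℝ F) p w v := fun p v w =>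
    second_derivative_symmetric (fun q => (hd q).hasFDerivAt)
      ((h2.differentiable (by simp) p).hasFDerivAt) v w
  have hV9 : ∀ t u w : ℝ, V9 (fun a b c => F (a,b,c)) t u w =
      -w * Real.sin u * fderiv ℝ F (t,u,w) (1,0,0)
      - (w * Real.cos u / t) * fderiv ℝ F (t,u,w) (0,1,0)
      + t * Real.sin u * fderiv ℝ F (t,u,w) (0,0,1) := by
    intro t u w
    simp only [V9]
    rw [(pdr (hd _)).deriv, (pdx (hd _)).deriv, (pdy (hd _)).deriv]
  have hV8 : ∀ t u w : ℝ, V8 (fun a b c => F (a,b,c)) t u w =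
      -w * Real.cos u * fderiv ℝ F (t,u,w) (1,0,0)
      + (w * Real.sin u / t) * fderiv ℝ F (t,u,w) (0,1,0)
      + t * Real.cos u * fderiv ℝ F (t,u,w) (0,0,1) := by
    intro t u w
    simp only [V8]
    rw [(pdr (hd _)).deriv, (pdx (hd _)).deriv, (pdy (hd _)).deriv]
  -- six directional derivatives
  have h1 : HasDerivAt (fun t => V9 (fun a b c => F (a,b,c)) t x y)
      (-y * Real.sin x * fderiv ℝ (fderiv ℝ F) (r,x,y) (1,0,0) (1,0,0)
        - (-(y * Real.cos x) / r^2 * fderiv ℝ F (r,x,y) (0,1,0)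
           + y * Real.cos x / r * fderiv ℝ (fderiv ℝ F) (r,x,y) (1,0,0) (0,1,0))
        + (Real.sin x * fderiv ℝ F (r,x,y) (0,0,1)
           + r * Real.sin x * fderiv ℝ (fderiv ℝ F) (r,x,y) (1,0,0) (0,0,1))) r := by
    rw [funext fun t => hV9 t x y]
    have base := (((pdr ((hdv (1,0,0)) (r,x,y))).const_mul (-y * Real.sin x)).sub
        (((hasDerivAt_const r (y * Real.cos x)).div (hasDerivAt_id r) hr.ne').mul
          (pdr ((hdv (0,1,0)) (r,x,y))))).add
        (((hasDerivAt_id r).mul_const (Real.sin x)).mul (pdr ((hdv (0,0,1)) (r,x,y))))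
    convert base using 1
    · rfl
    · rfl
    · rfl
    rw [happ, happ, happ]; try simp only [id_eq, Pi.div_apply, Pi.neg_apply]
    ring
  have h2' : HasDerivAt (fun u => V9 (fun a b c => F (a,b,c)) r u y)
      ((-y * Real.cos x * fderiv ℝ F (r,x,y) (1,0,0)
          + -y * Real.sin x * fderiv ℝ (fderiv ℝ F) (r,x,y) (0,1,0) (1,0,0))
        - (-(y * Real.sin x) / r * fderiv ℝ F (r,x,y) (0,1,0)
           + y * Real.cos x / r * fderiv ℝ (fderiv ℝ F) (r,x,y) (0,1,0) (0,1,0))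
        + (r * Real.cos x * fderiv ℝ F (r,x,y) (0,0,1)
           + r * Real.sin x * fderiv ℝ (fderiv ℝ F) (r,x,y) (0,1,0) (0,0,1))) x := by
    rw [funext fun u => hV9 r u y]
    have base := ((((Real.hasDerivAt_sin x).const_mul (-y)).mul
        (pdx ((hdv (1,0,0)) (r,x,y)))).sub
        ((((Real.hasDerivAt_cos x).const_mul y).div_const r).mul
          (pdx ((hdv (0,1,0)) (r,x,y))))).add
        ((((Real.hasDerivAt_sin x).const_mul r)).mul (pdx ((hdv (0,0,1)) (r,x,y))))
    convert base using 1
    · rfl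
    · rfl
    · rfl
    rw [happ, happ, happ]; try simp only [id_eq]
    ring
  have h3 : HasDerivAt (fun w => V9 (fun a b c => F (a,b,c)) r x w)
      ((-Real.sin x * fderiv ℝ F (r,x,y) (1,0,0)
          + -y * Real.sin x * fderiv ℝ (fderiv ℝ F) (r,x,y) (0,0,1) (1,0,0))
        - (Real.cos x / r * fderiv ℝ F (r,x,y) (0,1,0)
           + y * Real.cos x / r * fderiv ℝ (fderiv ℝ F) (r,x,y) (0,0,1) (0,1,0))
        + r * Real.sin x * fderiv ℝ (fderiv ℝ F) (r,x,y) (0,0,1) (0,0,1)) y := by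
    rw [funext fun w => hV9 r x w]
    have base := (((((hasDerivAt_id y).neg.mul_const (Real.sin x))).mul
        (pdy ((hdv (1,0,0)) (r,x,y)))).sub
        ((((hasDerivAt_id y).mul_const (Real.cos x)).div_const r).mul
          (pdy ((hdv (0,1,0)) (r,x,y))))).add
        ((pdy ((hdv (0,0,1)) (r,x,y))).const_mul (r * Real.sin x))
    convert base using 1
    · rfl
    · rfl
    · rfl
    rw [happ, happ, happ]; try simp only [id_eq, Pi.div_apply, Pi.neg_apply]
    ring
  have h4 : HasDerivAt (fun t => V8 (fun a b c => F (a,b,c)) t x y)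
      (-y * Real.cos x * fderiv ℝ (fderiv ℝ F) (r,x,y) (1,0,0) (1,0,0)
        + (-(y * Real.sin x) / r^2 * fderiv ℝ F (r,x,y) (0,1,0)
           + y * Real.sin x / r * fderiv ℝ (fderiv ℝ F) (r,x,y) (1,0,0) (0,1,0))
        + (Real.cos x * fderiv ℝ F (r,x,y) (0,0,1)
           + r * Real.cos x * fderiv ℝ (fderiv ℝ F) (r,x,y) (1,0,0) (0,0,1))) r := by
    rw [funext fun t => hV8 t x y]
    have base := (((pdr ((hdv (1,0,0)) (r,x,y))).const_mul (-y * Real.cos x)).add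
        (((hasDerivAt_const r (y * Real.sin x)).div (hasDerivAt_id r) hr.ne').mul
          (pdr ((hdv (0,1,0)) (r,x,y))))).add
        (((hasDerivAt_id r).mul_const (Real.cos x)).mul (pdr ((hdv (0,0,1)) (r,x,y))))
    convert base using 1
    · rfl
    · rfl
    · rfl
    rw [happ, happ, happ]; try simp only [id_eq, Pi.div_apply, Pi.neg_apply]
    ring
  have h5 : HasDerivAt (fun u => V8 (fun a b c => F (a,b,c)) r u y)
      ((y * Real.sin x * fderiv ℝ F (r,x,y) (1,0,0)
          + -y * Real.cos x * fderiv ℝ (fderiv ℝ F) (r,x,y) (0,1,0) (1,0,0))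
        + (y * Real.cos x / r * fderiv ℝ F (r,x,y) (0,1,0)
           + y * Real.sin x / r * fderiv ℝ (fderiv ℝ F) (r,x,y) (0,1,0) (0,1,0))
        + (-(r * Real.sin x) * fderiv ℝ F (r,x,y) (0,0,1)
           + r * Real.cos x * fderiv ℝ (fderiv ℝ F) (r,x,y) (0,1,0) (0,0,1))) x := by
    rw [funext fun u => hV8 r u y]
    have base := ((((Real.hasDerivAt_cos x).const_mul (-y)).mul
        (pdx ((hdv (1,0,0)) (r,x,y)))).add
        ((((Real.hasDerivAt_sin x).const_mul y).div_const r).mul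
          (pdx ((hdv (0,1,0)) (r,x,y))))).add
        ((((Real.hasDerivAt_cos x).const_mul r)).mul (pdx ((hdv (0,0,1)) (r,x,y))))
    convert base using 1
    · rfl
    · rfl
    · rfl
    rw [happ, happ, happ]; try simp only [id_eq]
    ring
  have h6 : HasDerivAt (fun w => V8 (fun a b c => F (a,b,c)) r x w)
      ((-Real.cos x * fderiv ℝ F (r,x,y) (1,0,0)
          + -y * Real.cos x * fderiv ℝ (fderiv ℝ F) (r,x,y) (0,0,1) (1,0,0))
        + (Real.sin x / r * fderiv ℝ F (r,x,y) (0,1,0)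
           + y * Real.sin x / r * fderiv ℝ (fderiv ℝ F) (r,x,y) (0,0,1) (0,1,0))
        + r * Real.cos x * fderiv ℝ (fderiv ℝ F) (r,x,y) (0,0,1) (0,0,1)) y := by
    rw [funext fun w => hV8 r x w]
    have base := (((((hasDerivAt_id y).neg.mul_const (Real.cos x))).mul
        (pdy ((hdv (1,0,0)) (r,x,y)))).add
        ((((hasDerivAt_id y).mul_const (Real.sin x)).div_const r).mul
          (pdy ((hdv (0,1,0)) (r,x,y))))).add
        ((pdy ((hdv (0,0,1)) (r,x,y))).const_mul (r * Real.cos x))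
    convert base using 1
    · rfl
    · rfl
    · rfl
    rw [happ, happ, happ]; try simp only [id_eq, Pi.div_apply, Pi.neg_apply]
    ring
  have main8 : V8 (V9 (fun a b c => F (a,b,c))) r x y
      = -y * Real.cos x * deriv (fun t => V9 (fun a b c => F (a,b,c)) t x y) r
        + (y * Real.sin x / r) * deriv (fun u => V9 (fun a b c => F (a,b,c)) r u y) x
        + r * Real.cos x * deriv (fun w => V9 (fun a b c => F (a,b,c)) r x w) y := rfl
  have main9 : V9 (V8 (fun a b c => F (a,b,c))) r x y
      = -y * Real.sin x * deriv (fun t => V8 (fun a b c => F (a,b,c)) t x y) r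
        - (y * Real.cos x / r) * deriv (fun u => V8 (fun a b c => F (a,b,c)) r u y) x
        + r * Real.sin x * deriv (fun w => V8 (fun a b c => F (a,b,c)) r x w) y := rfl
  rw [main8, main9, h1.deriv, h2'.deriv, h3.deriv, h4.deriv, h5.deriv, h6.deriv,
    (pdx (hd (r,x,y))).deriv]
  rw [show fderiv ℝ (fderiv ℝ F) (r,x,y) (0,1,0) (1,0,0)
      = fderiv ℝ (fderiv ℝ F) (r,x,y) (1,0,0) (0,1,0) from hsym _ _ _,
    show fderiv ℝ (fderiv ℝ F) (r,x,y) (0,0,1) (1,0,0)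
      = fderiv ℝ (fderiv ℝ F) (r,x,y) (1,0,0) (0,0,1) from hsym _ _ _,
    show fderiv ℝ (fderiv ℝ F) (r,x,y) (0,0,1) (0,1,0)
      = fderiv ℝ (fderiv ℝ F) (r,x,y) (0,1,0) (0,0,1) from hsym _ _ _]
  have hsc := Real.sin_sq_add_cos_sq x
  field_simp
  linear_combination (-(fderiv ℝ F (r,x,y) (0,1,0)) * r^2) * hsc

/-- `[v₈, v₉] = −∂_x` on smooth functions of `(r,x,y)` with `r > 0`. -/
theorem commutator_v8_v9_eq_neg_v1 (f : ℝ → ℝ → ℝ → ℝ)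
    (hf : ContDiff ℝ (⊤ : ℕ∞) (fun p : ℝ × ℝ × ℝ => f p.1 p.2.1 p.2.2)) :
    ∀ r x y : ℝ, 0 < r →
      V8 (V9 f) r x y - V9 (V8 f) r x y = -deriv (fun x' => f r x' y) x := by
  intro r x y hr
  have := aux (fun p => f p.1 p.2.1 p.2.2) hf r x y hr
  simpa using this
end
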